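/- arXiv:2103.05603 — 2 statements merged into one kernel-verified Lean document; each statement's English description precedes it below -/
import Mathlib

section
/- Let $d \in \mathbb{N}$, let $q > 0$, $C_a \ge 0$, $\epsilon > 0$, $t \ge 0$, let $x : [0,\infty) \to \mathbb{R}^d$ be continuous, let $m : [t,\infty) \to [0,\infty)$ be locally bounded, and let $\rho : [0,\infty) \to [0,\infty)$ satisfy $\rho(s) - \rho(t) \ge (q C_a + \epsilon)(s-t)$ for all $s \ge t$. Suppose that for every $s \ge t$ and every $u' \in [t,s]$ one has $|x(u')| \le |x(t)| + \int_t^{u'} C_a\,(1 + \sup_{r \in [0,v]} |x(r)|)\,dv + m(u')$. Then for every $s \ge t$, $e^{-\rho(s)} \sup_{r \in [t,s]} |x(r)|^q \le e^{-\rho(t)}\, e^{-\epsilon (s-t)} \big( \sup_{r \in [0,t]} |x(r)| + C_a(s-t) + \sup_{r \in [t,s]} m(r) \big)^q$. -/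
open Set MeasureTheory

/-- Exponential decay of the discounted running supremum: if `x` satisfies a linear-growth
Grönwall-type inequality from time `t` on, and the discount `ρ` grows at least at rate
`q C_a + ε`, then `e^{-ρ(s)} sup_{r∈[t,s]} |x r|^q` decays like
`e^{-ρ(t)} e^{-ε(s-t)} (sup_{r∈[0,t]} |x r| + C_a (s-t) + sup_{r∈[t,s]} m r)^q`. -/
theorem discounted_running_sup_decay (d : ℕ) (q Ca ε t : ℝ) (hq : 0 < q) (hCa : 0 ≤ Ca)
    (hε : 0 < ε) (ht : 0 ≤ t)
    (x : ℝ → EuclideanSpace ℝ (Fin d)) (hx : ContinuousOn x (Ici 0))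
    (m : ℝ → ℝ) (hm0 : ∀ r ∈ Ici t, 0 ≤ m r) (hmB : ∀ s ≥ t, BddAbove (m '' Icc t s))
    (ρ : ℝ → ℝ) (hρ0 : ∀ s ≥ 0, 0 ≤ ρ s)
    (hρ : ∀ s ≥ t, (q * Ca + ε) * (s - t) ≤ ρ s - ρ t)
    (hineq : ∀ s ≥ t, ∀ u' ∈ Icc t s,
      ‖x u'‖ ≤ ‖x t‖ + (∫ v in t..u', Ca * (1 + sSup ((fun r => ‖x r‖) '' Icc 0 v))) + m u') :
    ∀ s ≥ t,
      Real.exp (-ρ s) * sSup ((fun r => ‖x r‖ ^ q) '' Icc t s) ≤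
        Real.exp (-ρ t) * Real.exp (-ε * (s - t)) *
          (sSup ((fun r => ‖x r‖) '' Icc 0 t) + Ca * (s - t) + sSup (m '' Icc t s)) ^ q := by
  intro s hs
  set n : ℝ → ℝ := fun r => ‖x r‖ with hn
  set S : ℝ → ℝ := fun v => sSup (n '' Icc 0 v) with hSdef
  set g : ℝ → ℝ := fun v => Ca * (1 + S v) with hgdef
  set F : ℝ → ℝ := fun u => ∫ v in t..u, g v with hFdef
  set M0 : ℝ := S t with hM0
  set Ms : ℝ := sSup (m '' Icc t s) with hMs
  set B : ℝ := M0 + Ms with hB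
  set c : ℝ := Ca * (s - t) with hc
  have hts : t ≤ s := hs
  -- basic boundedness
  have hnb : ∀ v, 0 ≤ v → BddAbove (n '' Icc 0 v) := fun v hv =>
    (isCompact_Icc.image_of_continuousOn (hx.norm.mono (Icc_subset_Ici_self))).bddAbove
  have hS0 : ∀ v, 0 ≤ v → 0 ≤ S v := by
    intro v hv
    have : n 0 ≤ S v := le_csSup (hnb v hv) ⟨0, ⟨le_rfl, hv⟩, rfl⟩
    exact le_trans (norm_nonneg _) this
  have hSmono : ∀ v v', 0 ≤ v → v ≤ v' → S v ≤ S v' := by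
    intro v v' hv hvv'
    exact csSup_le_csSup (hnb v' (hv.trans hvv')) (((nonempty_Icc).mpr hv).image n)
      (image_mono (Icc_subset_Icc_right hvv'))
  have hxS : ∀ r v, 0 ≤ r → r ≤ v → n r ≤ S v := fun r v hr hrv =>
    le_csSup (hnb v (hr.trans hrv)) ⟨r, ⟨hr, hrv⟩, rfl⟩
  -- g monotone on relevant intervals, integrable
  have hgmono : ∀ v v', 0 ≤ v → v ≤ v' → g v ≤ g v' := by
    intro v v' hv hvv'
    have := hSmono v v' hv hvv'
    simp only [hgdef]
    nlinarith
  have hgi : ∀ a b, 0 ≤ a → a ≤ b → IntervalIntegrable g volume a b := by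
    intro a b ha hab
    apply MonotoneOn.intervalIntegrable
    intro u hu v hv huv
    rw [uIcc_of_le hab] at hu hv
    exact hgmono u v (ha.trans hu.1) huv
  have hg0 : ∀ v, 0 ≤ v → 0 ≤ g v := by
    intro v hv
    have := hS0 v hv
    simp only [hgdef]; nlinarith
  -- F properties
  have hF0 : ∀ u, t ≤ u → 0 ≤ F u := by
    intro u hu
    exact intervalIntegral.integral_nonneg hu (fun v hv => hg0 v (ht.trans hv.1))
  have hFmono : ∀ r u, t ≤ r → r ≤ u → F r ≤ F u := by
    intro r u hr hru
    have h1 : F r + ∫ v in r..u, g v = F u :=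
      intervalIntegral.integral_add_adjacent_intervals (hgi t r ht hr)
        (hgi r u (ht.trans hr) hru)
    have h2 : 0 ≤ ∫ v in r..u, g v :=
      intervalIntegral.integral_nonneg hru (fun v hv => hg0 v (ht.trans (hr.trans hv.1)))
    linarith
  -- Ms bounds
  have hMs0 : 0 ≤ Ms := le_trans (hm0 t self_mem_Ici)
    (le_csSup (hmB s hs) ⟨t, ⟨le_rfl, hts⟩, rfl⟩)
  have hmMs : ∀ r, t ≤ r → r ≤ s → m r ≤ Ms := fun r hr hrs =>
    le_csSup (hmB s hs) ⟨r, ⟨hr, hrs⟩, rfl⟩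
  have hM00 : 0 ≤ M0 := hS0 t ht
  -- key: S u ≤ B + F u on [t,s]
  have hSB : ∀ u, t ≤ u → u ≤ s → S u ≤ B + F u := by
    intro u hu hus
    apply csSup_le (((nonempty_Icc).mpr (ht.trans hu)).image n)
    rintro y ⟨r, ⟨hr0, hru⟩, rfl⟩
    rcases le_or_gt r t with h | h
    · have h1 : n r ≤ M0 := hxS r t hr0 h
      have := hF0 u hu
      simp only [hB]; linarith
    · have hr : r ∈ Icc t s := ⟨h.le, hru.trans hus⟩
      have h1 := hineq s hs r hr
      have h2 : ‖x t‖ ≤ M0 := hxS t t ht le_rfl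
      have h3 : m r ≤ Ms := hmMs r hr.1 hr.2
      have h4 : F r ≤ F u := hFmono r u hr.1 hru
      have h5 : (∫ v in t..r, Ca * (1 + sSup ((fun r => ‖x r‖) '' Icc 0 v))) = F r := rfl
      rw [h5] at h1
      simp only [hB]
      calc n r ≤ ‖x t‖ + F r + m r := h1
      _ ≤ M0 + Ms + F u := by linarith
  -- Gronwall
  have hFcont : ContinuousOn F (Icc t s) := by
    have := intervalIntegral.continuousOn_primitive_interval'
      (μ := volume) (hgi t s ht hts) (left_mem_uIcc (a := t) (b := s))
    rwa [uIcc_of_le hts] at this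
  have hgron : ∀ u ∈ Icc t s, F u ≤ gronwallBound 0 Ca (Ca * (1 + B)) (u - t) := by
    apply le_gronwallBound_of_liminf_deriv_right_le (f' := g) hFcont
    · -- liminf condition
      intro u hu r hr
      have hu0 : 0 ≤ u := ht.trans hu.1
      -- choose η with g (u + z) < r for small z
      have hη : 0 < (r - g u) / (Ca + 1) := by
        apply div_pos (by linarith) (by linarith)
      set η := (r - g u) / (Ca + 1) with hηdef
      -- right continuity of S at u: find δ
      have hxc : ContinuousWithinAt x (Ici 0) u := hx u (le_trans ht hu.1)
      rw [Metric.continuousWithinAt_iff] at hxc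
      obtain ⟨δ, hδ0, hδ⟩ := hxc η hη
      have key : ∀ z, u < z → z < u + δ → z ≤ s → S z ≤ S u + η := by
        intro z huz hzδ hzs
        apply csSup_le (((nonempty_Icc).mpr (hu0.trans huz.le)).image n)
        rintro y ⟨w, ⟨hw0, hwz⟩, rfl⟩
        rcases le_or_gt w u with h | h
        · exact le_trans (hxS w u hw0 h) (by linarith)
        · have hdw : dist w u < δ := by
            rw [Real.dist_eq, abs_of_pos (by linarith)]
            linarith
          have := hδ hw0 hdw
          have h2 : n w ≤ n u + dist (x w) (x u) := by
            have := norm_sub_norm_le (x w) (x u)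
            rw [dist_eq_norm]
            simp only [hn]; linarith
          have h3 : n u ≤ S u := hxS u u hu0 le_rfl
          linarith
      -- g (u+z) < r for small z
      have keyg : ∀ z, u < z → z < u + δ → z ≤ s → g z < r := by
        intro z huz hzδ hzs
        have h1 := key z huz hzδ hzs
        have : g z ≤ Ca * (1 + S u + η) := by
          simp only [hgdef]; nlinarith
        have h2 : Ca * η < r - g u := by
          have he : (Ca + 1) * η = r - g u := by
            rw [hηdef]; field_simp
          nlinarith
        have hgu : g u = Ca * (1 + S u) := rfl
        rw [hgu] at h2
        simp only [hgdef] at this ⊢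
        linarith
      -- frequently
      have hne : (nhdsWithin u (Ioi u)).NeBot := nhdsGT_neBot u
      apply Filter.Eventually.frequently
      have hev : ∀ᶠ z in nhdsWithin u (Ioi u), z < min (u + δ) s := by
        apply eventually_nhdsWithin_of_eventually_nhds
        apply Filter.Tendsto.eventually_lt_const (by simp [lt_min_iff, hδ0, hu.2]) Filter.tendsto_id
      filter_upwards [hev, self_mem_nhdsWithin] with z hz hz'
      have huz : u < z := hz'
      have hzδ : z < u + δ := lt_of_lt_of_le hz (min_le_left _ _)
      have hzs : z ≤ s := le_of_lt (lt_of_lt_of_le hz (min_le_right _ _))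
      have hdiff : F z - F u = ∫ v in u..z, g v := by
        have := intervalIntegral.integral_add_adjacent_intervals (hgi t u ht hu.1)
          (hgi u z hu0 huz.le)
        simp only [hFdef]; linarith
      have hint : (∫ v in u..z, g v) ≤ (z - u) * g z := by
        have h1 : (∫ v in u..z, g v) ≤ ∫ _ in u..z, g z := by
          apply intervalIntegral.integral_mono_on huz.le (hgi u z hu0 huz.le)
            intervalIntegrable_const
          intro w hw
          exact hgmono w z (hu0.trans hw.1) hw.2
        rwa [intervalIntegral.integral_const, smul_eq_mul] at h1
      rw [hdiff]
      have hzu0 : 0 < z - u := by linarith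
      calc (z - u)⁻¹ * ∫ v in u..z, g v ≤ (z - u)⁻¹ * ((z - u) * g z) := by
            apply mul_le_mul_of_nonneg_left hint (le_of_lt (inv_pos.mpr hzu0))
      _ = g z := by field_simp
      _ < r := keyg z huz hzδ hzs
    · simp only [hFdef]; rw [intervalIntegral.integral_same]
    · -- bound: g u ≤ Ca * F u + Ca * (1 + B)
      intro u hu
      have h1 := hSB u hu.1 hu.2.le
      simp only [hgdef]
      nlinarith
  -- evaluate gronwall bound at s
  have hSfinal : S s ≤ (1 + B) * Real.exp c - 1 := by
    have h1 := hgron s ⟨hts, le_rfl⟩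
    have h2 := hSB s hts le_rfl
    rcases eq_or_ne Ca 0 with h | h
    · rw [h] at h1
      rw [gronwallBound_K0] at h1
      simp [h] at h1
      have : Real.exp c = 1 := by rw [hc, h]; simp
      rw [this]
      linarith
    · rw [gronwallBound_of_K_ne_0 h] at h1
      have h3 : Ca * (1 + B) / Ca = 1 + B := by field_simp
      rw [h3] at h1
      simp only [zero_mul, zero_add] at h1
      rw [hc]
      linarith
  have hc0 : 0 ≤ c := mul_nonneg hCa (by linarith)
  -- e^c - 1 ≤ c e^c
  have hexp : (1 + B) * Real.exp c - 1 ≤ (B + c) * Real.exp c := by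
    have h1 : Real.exp (-c) * Real.exp c = 1 := by rw [← Real.exp_add]; simp
    have h2 := Real.add_one_le_exp (-c)
    nlinarith [Real.exp_pos c]
  have hXB : ∀ r ∈ Icc t s, n r ≤ Real.exp c * (B + c) := by
    intro r hr
    have h1 : n r ≤ S s := hxS r s (ht.trans hr.1) hr.2
    nlinarith
  have hBc0 : 0 ≤ B + c := by simp only [hB]; linarith
  -- sup of rpow
  have hsup : sSup ((fun r => ‖x r‖ ^ q) '' Icc t s) ≤ (Real.exp c * (B + c)) ^ q := by
    apply csSup_le (((nonempty_Icc).mpr hts).image _)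
    rintro y ⟨r, hr, rfl⟩
    exact Real.rpow_le_rpow (norm_nonneg _) (hXB r hr) hq.le
  have hrpow : (Real.exp c * (B + c)) ^ q = Real.exp (c * q) * (B + c) ^ q := by
    have h1 : Real.exp c ^ q = Real.exp (c * q) := (Real.exp_mul c q).symm
    rw [Real.mul_rpow (Real.exp_pos c).le hBc0, h1]
  have hexps : Real.exp (-ρ s) * Real.exp (c * q) ≤ Real.exp (-ρ t) * Real.exp (-ε * (s - t)) := by
    rw [← Real.exp_add, ← Real.exp_add, Real.exp_le_exp]
    have := hρ s hs
    rw [hc]; nlinarith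
  have hfinal : Real.exp (-ρ s) * sSup ((fun r => ‖x r‖ ^ q) '' Icc t s) ≤
      Real.exp (-ρ t) * Real.exp (-ε * (s - t)) * (B + c) ^ q := by
    calc Real.exp (-ρ s) * sSup ((fun r => ‖x r‖ ^ q) '' Icc t s)
        ≤ Real.exp (-ρ s) * (Real.exp c * (B + c)) ^ q :=
          mul_le_mul_of_nonneg_left hsup (Real.exp_pos _).le
      _ = Real.exp (-ρ s) * Real.exp (c * q) * (B + c) ^ q := by rw [hrpow]; ring
      _ ≤ Real.exp (-ρ t) * Real.exp (-ε * (s - t)) * (B + c) ^ q :=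
          mul_le_mul_of_nonneg_right hexps (Real.rpow_nonneg hBc0 q)
  have heq : B + c = sSup ((fun r => ‖x r‖) '' Icc 0 t) + Ca * (s - t) + sSup (m '' Icc t s) := by
    simp only [hB, hM0, hMs, hc, hSdef, hn]; ring
  rw [← heq]
  exact hfinal
end

section
/- Let $d \in \mathbb{N}$, let $C_a \ge 0$, $\delta > 0$, $t \ge 0$. Let $h : [0,\infty) \to \mathbb{R}$ be continuous with $h(r) = 0$ for all $r \in [0,t]$, continuously differentiable on $[t,\infty)$ with $h'(r) \le -(C_a + \delta)$ for all $r \ge t$. Let $x : [0,\infty) \to \mathbb{R}^d$ be continuous, let $m : [t,\infty) \to \mathbb{R}^d$ be continuous with $m(t) = 0$, and let $b : [t,\infty) \to \mathbb{R}^d$ be measurable with $|b(r)| \le C_a (1 + \sup_{u \in [0,r]} |x(u)|)$ for all $r \ge t$. Suppose that for every $s \ge t$, $e^{h(s)} x(s) = x(t) + \int_t^s e^{h(r)} \big( b(r) + h'(r)\, x(r) \big)\, dr + m(s)$. Then for every $s \ge t$, $\sup_{r \in [0,s]} e^{h(r)} |x(r)| \le \frac{C_a + \delta}{\delta}\Big(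 1 + \sup_{r \in [0,t]} |x(r)| + 2 \sup_{r \in [t,s]} |m(r)| \Big)$. -/
open Set MeasureTheory

section aux

variable {E : Type*} [NormedAddCommGroup E] [NormedSpace ℝ E]

omit [NormedSpace ℝ E] in
lemma bddII {f : ℝ → E} {a b : ℝ} (hab : a ≤ b)
    (hf : AEStronglyMeasurable f (volume.restrict (Ioc a b))) {K : ℝ}
    (hK : ∀ r ∈ Ioc a b, ‖f r‖ ≤ K) : IntervalIntegrable f volume a b := by
  rw [intervalIntegrable_iff_integrableOn_Ioc_of_le hab]
  haveI : IsFiniteMeasure (volume.restrict (Ioc a b)) :=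
    ⟨by rw [Measure.restrict_apply_univ]; exact measure_Ioc_lt_top⟩
  exact Integrable.mono' (integrable_const K) hf
    ((ae_restrict_mem measurableSet_Ioc).mono hK)

lemma tri_swap [CompleteSpace E] [SecondCountableTopology E]
    {q : ℝ → ℝ} {c : ℝ → E} {a b : ℝ} (hab : a ≤ b)
    (hq : Continuous q) (hc : StronglyMeasurable c) {K : ℝ}
    (hK : ∀ r ∈ Ioc a b, ‖c r‖ ≤ K) :
    ∫ r in a..b, (∫ u in r..b, q u) • c r = ∫ u in a..b, q u • ∫ r in a..u, c r := by
  set μ := volume.restrict (Ioc a b) with hμ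
  haveI : IsFiniteMeasure μ :=
    ⟨by rw [hμ, Measure.restrict_apply_univ]; exact measure_Ioc_lt_top⟩
  obtain ⟨Kq, hKq⟩ := (isCompact_Icc : IsCompact (Icc a b)).exists_bound_of_continuousOn
    hq.continuousOn
  set F : ℝ × ℝ → E := fun p => {p : ℝ × ℝ | p.1 < p.2}.indicator (fun p => q p.2 • c p.1) p
    with hF
  have hFm : AEStronglyMeasurable F (μ.prod μ) := by
    refine StronglyMeasurable.aestronglyMeasurable ?_
    exact ((hq.comp continuous_snd).stronglyMeasurable.smul
      (hc.comp_measurable measurable_fst)).indicator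
      (measurableSet_lt measurable_fst measurable_snd)
  have hFi : Integrable F (μ.prod μ) := by
    refine Integrable.mono' (integrable_const ((max Kq 0) * max K 0)) hFm ?_
    have hprod : μ.prod μ = (volume.prod volume).restrict (Ioc a b ×ˢ Ioc a b) :=
      Measure.prod_restrict _ _
    rw [hprod]
    filter_upwards [ae_restrict_mem (measurableSet_Ioc.prod measurableSet_Ioc)] with p hp
    have h1 : ‖F p‖ ≤ ‖q p.2 • c p.1‖ := norm_indicator_le_norm_self _ _
    refine h1.trans ?_
    rw [norm_smul]
    apply mul_le_mul
    · exact (hKq p.2 (Ioc_subset_Icc_self hp.2)).trans (le_max_left _ _)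
    · exact (hK p.1 hp.1).trans (le_max_left K 0)
    · exact norm_nonneg _
    · exact le_max_right _ _
  have key := integral_integral_swap (f := fun r u => F (r, u)) (μ := μ) (ν := μ) hFi
  calc ∫ r in a..b, (∫ u in r..b, q u) • c r
      = ∫ r in Ioc a b, (∫ u in r..b, q u) • c r := intervalIntegral.integral_of_le hab
    _ = ∫ r in Ioc a b, ∫ u, F (r, u) ∂μ := by
        refine setIntegral_congr_fun measurableSet_Ioc ?_
        intro r hr
        simp only
        have h1 : ∫ u in r..b, q u = ∫ u, (Ioi r).indicator q u ∂μ := by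
          rw [hμ, integral_indicator measurableSet_Ioi,
            Measure.restrict_restrict measurableSet_Ioi]
          have : Ioi r ∩ Ioc a b = Ioc r b := by
            ext u
            simp only [mem_inter_iff, mem_Ioi, mem_Ioc]
            exact ⟨fun ⟨h1, _, h3⟩ => ⟨h1, h3⟩, fun ⟨h1, h2⟩ => ⟨h1, hr.1.trans h1, h2⟩⟩
          rw [this, intervalIntegral.integral_of_le hr.2]
        rw [h1, ← integral_smul_const]
        congr 1
        ext u
        by_cases hru : r < u
        · simp [hF, Set.indicator_of_mem, hru]
        · simp [hF, Set.indicator_of_notMem, hru]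
    _ = ∫ u, ∫ r, F (r, u) ∂μ ∂μ := key
    _ = ∫ u in Ioc a b, q u • ∫ r in a..u, c r := by
        refine setIntegral_congr_fun measurableSet_Ioc ?_
        intro u hu
        simp only
        have h1 : (fun r => F (r, u)) = (Iio u).indicator (fun r => q u • c r) := by
          ext r
          by_cases hru : r < u
          · simp [hF, Set.indicator_of_mem, hru]
          · simp [hF, Set.indicator_of_notMem, hru]
        rw [h1, hμ, integral_indicator measurableSet_Iio,
          Measure.restrict_restrict measurableSet_Iio]
        have h2 : Iio u ∩ Ioc a b = Ioo a u := by
          ext r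
          simp only [mem_inter_iff, mem_Iio, mem_Ioc, mem_Ioo]
          exact ⟨fun ⟨h1, h2, _⟩ => ⟨h2, h1⟩, fun ⟨h2, h1⟩ => ⟨h1, h2, (h1.le.trans hu.2)⟩⟩
        rw [h2, ← integral_Ioc_eq_integral_Ioo, ← intervalIntegral.integral_of_le hu.1.le,
          intervalIntegral.integral_smul]
    _ = ∫ u in a..b, q u • ∫ r in a..u, c r := (intervalIntegral.integral_of_le hab).symm

end aux

set_option maxHeartbeats 2000000 in
/-- Weighted pathwise estimate by variation of constants: if
`e^{h(s)} x(s) = x(t) + ∫_t^s e^{h(r)} (b(r) + h'(r) x(r)) dr + m(s)` with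
`|b(r)| ≤ C_a (1 + sup_{u∈[0,r]} |x u|)` and `h' ≤ -(C_a + δ)` on `[t,∞)`, `h ≡ 0` on `[0,t]`,
then `sup_{r∈[0,s]} e^{h(r)} |x r| ≤ ((C_a+δ)/δ) (1 + sup_{r∈[0,t]} |x r| + 2 sup_{r∈[t,s]} |m r|)`. -/
theorem weighted_path_estimate (d : ℕ) (Ca δ t : ℝ) (hCa : 0 ≤ Ca) (hδ : 0 < δ) (ht : 0 ≤ t)
    (h h' : ℝ → ℝ) (hhcont : Continuous h) (hh0 : ∀ r ∈ Icc 0 t, h r = 0)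
    (hhderiv : ∀ r ∈ Ici t, HasDerivWithinAt h (h' r) (Ici t) r)
    (hh'cont : ContinuousOn h' (Ici t))
    (hh' : ∀ r ∈ Ici t, h' r ≤ -(Ca + δ))
    (x : ℝ → EuclideanSpace ℝ (Fin d)) (hx : ContinuousOn x (Ici 0))
    (m : ℝ → EuclideanSpace ℝ (Fin d)) (hmcont : ContinuousOn m (Ici t)) (hmt : m t = 0)
    (b : ℝ → EuclideanSpace ℝ (Fin d)) (hbmeas : Measurable b)
    (hb : ∀ r ∈ Ici t, ‖b r‖ ≤ Ca * (1 + sSup ((fun v => ‖x v‖) '' Icc 0 r)))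
    (heq : ∀ s ∈ Ici t,
      Real.exp (h s) • x s =
        x t + (∫ r in t..s, Real.exp (h r) • (b r + h' r • x r)) + m s) :
    ∀ s ∈ Ici t,
      sSup ((fun r => Real.exp (h r) * ‖x r‖) '' Icc 0 s) ≤
        ((Ca + δ) / δ) *
          (1 + sSup ((fun r => ‖x r‖) '' Icc 0 t) + 2 * sSup ((fun r => ‖m r‖) '' Icc t s)) := by
  intro s hs
  rw [mem_Ici] at hs
  have hP : 0 < Ca + δ := by linarith
  have ht0 : h t = 0 := hh0 t ⟨ht, le_rfl⟩
  have h0s : (0:ℝ) ≤ s := ht.trans hs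
  -- globally defined modifications
  set X : ℝ → EuclideanSpace ℝ (Fin d) := fun r => x (max r 0) with hXdef
  have hXcont : Continuous X :=
    hx.comp_continuous (continuous_id.max continuous_const) (fun r => mem_Ici.2 (le_max_right r 0))
  have hXeq : ∀ r, 0 ≤ r → X r = x r := fun r hr => by
    simp only [hXdef]; rw [max_eq_left hr]
  set H' : ℝ → ℝ := fun r => h' (max r t) with hH'def
  have hH'cont : Continuous H' :=
    hh'cont.comp_continuous (continuous_id.max continuous_const)
      (fun r => mem_Ici.2 (le_max_right r t))
  have hH'eq : ∀ r, t ≤ r → H' r = h' r := fun r hr => by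
    simp only [hH'def]; rw [max_eq_left hr]
  set M : ℝ → EuclideanSpace ℝ (Fin d) := fun r => m (max r t) with hMdef
  have hMcont : Continuous M :=
    hmcont.comp_continuous (continuous_id.max continuous_const)
      (fun r => mem_Ici.2 (le_max_right r t))
  have hMeq : ∀ r, t ≤ r → M r = m r := fun r hr => by
    simp only [hMdef]; rw [max_eq_left hr]
  set c : ℝ → EuclideanSpace ℝ (Fin d) :=
    fun r => Real.exp (h r) • (b r + H' r • X r) with hcdef
  set q : ℝ → ℝ := fun u => -H' u * Real.exp (-h u) with hqdef
  have hqcont : Continuous q := (hH'cont.neg).mul (hhcont.neg.rexp)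
  -- derivative facts
  have hdAt : ∀ r, t < r → HasDerivAt h (h' r) r := fun r hr =>
    (hhderiv r (le_of_lt hr)).hasDerivAt (Ici_mem_nhds hr)
  have hψ : AntitoneOn (fun r => h r + (Ca + δ) * r) (Ici t) := by
    have hd : ∀ r ∈ interior (Ici t),
        HasDerivAt (fun r => h r + (Ca + δ) * r) (h' r + (Ca + δ) * 1) r := by
      intro r hr
      rw [interior_Ici] at hr
      exact (hdAt r hr).add ((hasDerivAt_id r).const_mul (Ca + δ))
    apply antitoneOn_of_deriv_nonpos (convex_Ici t)
    · exact hhcont.continuousOn.add (continuous_const.mul continuous_id).continuousOn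
    · exact fun r hr => (hd r hr).differentiableAt.differentiableWithinAt
    · intro r hr
      rw [(hd r hr).deriv]
      have := hh' r (le_of_lt (show t < r by rwa [interior_Ici] at hr))
      linarith
  have hgap : ∀ a v, t ≤ a → a ≤ v → h v - h a ≤ -(Ca + δ) * (v - a) := by
    intro a v ha hav
    have := hψ (mem_Ici.2 ha) (mem_Ici.2 (ha.trans hav)) hav
    simp only at this
    nlinarith [this]
  have hha : ∀ a v, t ≤ a → a ≤ v → h v ≤ h a := by
    intro a v ha hav
    have h1 := hgap a v ha hav
    nlinarith
  have hneg : ∀ r, 0 ≤ r → h r ≤ 0 := by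
    intro r hr
    rcases le_total r t with h1 | h1
    · rw [hh0 r ⟨hr, h1⟩]
    · rw [← ht0]; exact hha t r le_rfl h1
  have hexple1 : ∀ r, 0 ≤ r → Real.exp (h r) ≤ 1 := by
    intro r hr
    rw [← Real.exp_zero]
    exact Real.exp_le_exp.2 (hneg r hr)
  have honele : ∀ r, 0 ≤ r → 1 ≤ Real.exp (-h r) := by
    intro r hr
    rw [← Real.exp_zero]
    exact Real.exp_le_exp.2 (by linarith [hneg r hr])
  -- FTC for exp (-h)
  have hFTC : ∀ a v, t ≤ a → a ≤ v →
      (∫ u in a..v, q u) = Real.exp (-h v) - Real.exp (-h a) := by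
    intro a v ha hav
    apply intervalIntegral.integral_eq_sub_of_hasDeriv_right_of_le hav
    · exact (hhcont.neg.rexp).continuousOn
    · intro u hu
      have hu' : t < u := lt_of_le_of_lt ha hu.1
      have hd : HasDerivAt (fun w => Real.exp (-h w)) (q u) u := by
        have hd0 : HasDerivAt (fun w => Real.exp (-h w)) (Real.exp (-h u) * -h' u) u :=
          ((hdAt u hu').neg).exp
        convert hd0 using 1
        rw [hqdef]
        simp only
        rw [hH'eq u (le_of_lt hu')]
        ring
      exact hd.hasDerivWithinAt
    · exact hqcont.intervalIntegrable _ _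
  -- sup quantities
  set S := sSup ((fun r => Real.exp (h r) * ‖x r‖) '' Icc 0 s) with hSdef
  set Mt := sSup ((fun r => ‖x r‖) '' Icc 0 t) with hMtdef
  set Mm := sSup ((fun r => ‖m r‖) '' Icc t s) with hMmdef
  set Kx := sSup ((fun v => ‖x v‖) '' Icc 0 s) with hKxdef
  have hxnorm : ContinuousOn (fun r => ‖x r‖) (Icc 0 s) := (hx.mono Icc_subset_Ici_self).norm
  have hSbdd : BddAbove ((fun r => Real.exp (h r) * ‖x r‖) '' Icc 0 s) :=
    (isCompact_Icc.image_of_continuousOn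
      (((hhcont.rexp).continuousOn).mul hxnorm)).bddAbove
  have hSle : ∀ r ∈ Icc 0 s, Real.exp (h r) * ‖x r‖ ≤ S := fun r hr =>
    le_csSup hSbdd ⟨r, hr, rfl⟩
  have hS0 : 0 ≤ S := le_trans (by positivity) (hSle 0 ⟨le_rfl, h0s⟩)
  have hMtbdd : BddAbove ((fun r => ‖x r‖) '' Icc 0 t) :=
    (isCompact_Icc.image_of_continuousOn ((hx.mono Icc_subset_Ici_self).norm)).bddAbove
  have hMtle : ∀ r ∈ Icc 0 t, ‖x r‖ ≤ Mt := fun r hr => le_csSup hMtbdd ⟨r, hr, rfl⟩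
  have hMt0 : 0 ≤ Mt := le_trans (norm_nonneg _) (hMtle t ⟨ht, le_rfl⟩)
  have hMmbdd : BddAbove ((fun r => ‖m r‖) '' Icc t s) :=
    (isCompact_Icc.image_of_continuousOn ((hmcont.mono Icc_subset_Ici_self).norm)).bddAbove
  have hMmle : ∀ r ∈ Icc t s, ‖m r‖ ≤ Mm := fun r hr => le_csSup hMmbdd ⟨r, hr, rfl⟩
  have hMm0 : 0 ≤ Mm := le_trans (norm_nonneg _) (hMmle t ⟨le_rfl, hs⟩)
  have hKxbdd : BddAbove ((fun v => ‖x v‖) '' Icc 0 s) :=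
    (isCompact_Icc.image_of_continuousOn hxnorm).bddAbove
  have hKx : ∀ r ∈ Icc 0 s, sSup ((fun v => ‖x v‖) '' Icc 0 r) ≤ Kx := by
    intro r hr
    exact csSup_le_csSup hKxbdd ((nonempty_Icc.2 hr.1).image _)
      (image_mono (Icc_subset_Icc le_rfl hr.2))
  have hKx0 : 0 ≤ Kx := le_trans (norm_nonneg _) (le_csSup hKxbdd ⟨0, ⟨le_rfl, h0s⟩, rfl⟩)
  have hsupr : ∀ r ∈ Icc t s, sSup ((fun v => ‖x v‖) '' Icc 0 r) ≤ Real.exp (-h r) * S := by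
    intro r hr
    apply Real.sSup_le _ (by positivity)
    rintro _ ⟨u, hu, rfl⟩
    have hus : u ∈ Icc 0 s := ⟨hu.1, hu.2.trans hr.2⟩
    have hru : h r ≤ h u := by
      rcases le_total u t with h1 | h1
      · rw [hh0 u ⟨hu.1, h1⟩]; exact hneg r (ht.trans hr.1)
      · exact hha u r h1 hu.2
    calc ‖x u‖ = Real.exp (-h u) * (Real.exp (h u) * ‖x u‖) := by
          rw [← mul_assoc, ← Real.exp_add, neg_add_cancel, Real.exp_zero, one_mul]
      _ ≤ Real.exp (-h u) * S := mul_le_mul_of_nonneg_left (hSle u hus) (Real.exp_nonneg _)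
      _ ≤ Real.exp (-h r) * S :=
          mul_le_mul_of_nonneg_right (Real.exp_le_exp.2 (neg_le_neg hru)) hS0
  -- bounds for b and c
  have hbb : ∀ r ∈ Icc t s, ‖b r‖ ≤ Ca * (1 + Kx) := by
    intro r hr
    refine (hb r hr.1).trans ?_
    have := hKx r ⟨ht.trans hr.1, hr.2⟩
    nlinarith
  obtain ⟨K1, hK1⟩ := (isCompact_Icc : IsCompact (Icc t s)).exists_bound_of_continuousOn
    ((hH'cont.smul hXcont).continuousOn : ContinuousOn (fun r => H' r • X r) (Icc t s))
  have hcbdd : ∀ r ∈ Icc t s, ‖c r‖ ≤ Ca * (1 + Kx) + K1 := by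
    intro r hr
    have h1 : ‖c r‖ = Real.exp (h r) * ‖b r + H' r • X r‖ := by
      rw [hcdef]; simp only; rw [norm_smul, Real.norm_eq_abs, abs_of_pos (Real.exp_pos _)]
    rw [h1]
    calc Real.exp (h r) * ‖b r + H' r • X r‖ ≤ 1 * ‖b r + H' r • X r‖ :=
          mul_le_mul_of_nonneg_right (hexple1 r (ht.trans hr.1)) (norm_nonneg _)
      _ = ‖b r + H' r • X r‖ := one_mul _
      _ ≤ ‖b r‖ + ‖H' r • X r‖ := norm_add_le _ _
      _ ≤ Ca * (1 + Kx) + K1 := add_le_add (hbb r hr) (hK1 r hr)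
  have hcmeas : StronglyMeasurable c := by
    apply Measurable.stronglyMeasurable
    exact ((hhcont.rexp).measurable).smul
      (hbmeas.add (hH'cont.smul hXcont).measurable)
  have hcInt : ∀ a v, t ≤ a → a ≤ v → v ≤ s → IntervalIntegrable c volume a v := by
    intro a v h1 h2 h3
    exact bddII h2 hcmeas.aestronglyMeasurable
      (fun r hr => hcbdd r ⟨h1.trans hr.1.le, hr.2.trans h3⟩)
  have hbInt : ∀ v, t ≤ v → v ≤ s → IntervalIntegrable b volume t v := by
    intro v h1 h2
    exact bddII h1 hbmeas.stronglyMeasurable.aestronglyMeasurable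
      (fun r hr => hbb r ⟨hr.1.le, hr.2.trans h2⟩)
  have hintcongr : ∀ v, t ≤ v →
      (∫ r in t..v, Real.exp (h r) • (b r + h' r • x r)) = ∫ r in t..v, c r := by
    intro v hv
    apply intervalIntegral.integral_congr
    intro r hr
    rw [uIcc_of_le hv] at hr
    rw [hcdef]; simp only
    rw [hH'eq r hr.1, hXeq r (ht.trans hr.1)]
  have heq' : ∀ v, t ≤ v → Real.exp (h v) • x v = x t + (∫ r in t..v, c r) + m v := by
    intro v h1
    rw [← hintcongr v h1]; exact heq v h1
  -- uniform bounds for exp(-h) and c on [t,s]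
  obtain ⟨Ke, hKee⟩ := (isCompact_Icc : IsCompact (Icc t s)).exists_bound_of_continuousOn
    ((hhcont.neg.rexp).continuousOn :
      ContinuousOn (fun r => Real.exp (-h r)) (Icc t s))
  have hKe' : ∀ r ∈ Icc t s, Real.exp (-h r) ≤ Ke := by
    intro r hr
    have := hKee r hr
    rwa [Real.norm_eq_abs, abs_of_pos (Real.exp_pos _)] at this
  have hKe0 : 0 ≤ Ke := le_trans (Real.exp_nonneg _) (hKe' t ⟨le_rfl, hs⟩)
  set Kc := Ca * (1 + Kx) + K1 with hKcdef
  have hKc0 : 0 ≤ Kc := le_trans (norm_nonneg _) (hcbdd t ⟨le_rfl, hs⟩)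
  have hqM : Continuous (fun u => q u • M u) := hqcont.smul hMcont
  have hHX : Continuous (fun u => H' u • X u) := hH'cont.smul hXcont
  -- the main pointwise estimate on [t,s]
  have hmain : ∀ σ ∈ Icc t s,
      Real.exp (h σ) * ‖x σ‖ ≤ Mt + Ca / (Ca + δ) * (1 + S) + 2 * Mm := by
    intro σ hσ
    obtain ⟨hts, hσs⟩ := hσ
    have hA1 : IntervalIntegrable (fun r => Real.exp (-h r) • c r) volume t σ := by
      apply bddII hts
        (((hhcont.neg.rexp).stronglyMeasurable).smul
          hcmeas).aestronglyMeasurable (K := Ke * Kc)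
      intro r hr
      have hr' : r ∈ Icc t s := ⟨hr.1.le, hr.2.trans hσs⟩
      show ‖Real.exp (-h r) • c r‖ ≤ _
      rw [norm_smul, Real.norm_eq_abs, abs_of_pos (Real.exp_pos _)]
      exact mul_le_mul (hKe' r hr') (hcbdd r hr') (norm_nonneg _) hKe0
    have hprim : Continuous (fun r => ∫ u in r..σ, q u) := by
      have e : (fun r => ∫ u in r..σ, q u)
          = fun r => (∫ u in t..σ, q u) - ∫ u in t..r, q u := by
        funext r
        rw [eq_sub_iff_add_eq, add_comm]
        exact intervalIntegral.integral_add_adjacent_intervals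
          (hqcont.intervalIntegrable t r) (hqcont.intervalIntegrable r σ)
      rw [e]
      exact continuous_const.sub
        (intervalIntegral.continuous_primitive (fun a b => hqcont.intervalIntegrable a b) t)
    have hA2 : IntervalIntegrable (fun r => (∫ u in r..σ, q u) • c r) volume t σ := by
      apply bddII hts ((hprim.stronglyMeasurable).smul hcmeas).aestronglyMeasurable
        (K := 2 * Ke * Kc)
      intro r hr
      have hr' : r ∈ Icc t s := ⟨hr.1.le, hr.2.trans hσs⟩
      show ‖(∫ u in r..σ, q u) • c r‖ ≤ _
      rw [norm_smul, hFTC r σ hr.1.le hr.2, Real.norm_eq_abs]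
      have e1 : |Real.exp (-h σ) - Real.exp (-h r)| ≤ 2 * Ke := by
        have i1 := hKe' r hr'
        have i2 := hKe' σ ⟨hts, hσs⟩
        rw [abs_le]
        constructor <;> nlinarith [Real.exp_pos (-h σ), Real.exp_pos (-h r)]
      exact mul_le_mul e1 (hcbdd r hr') (norm_nonneg _) (by positivity)
    -- variation of constants identity
    have key : x t + (∫ r in t..σ, c r) =
        Real.exp (h σ) • (x t + ∫ r in t..σ, (b r + (H' r * Real.exp (-h r)) • M r)) := by
      have ha2 : (∫ r in t..σ, Real.exp (-h σ) • c r)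
          = (∫ r in t..σ, Real.exp (-h r) • c r)
            + ∫ r in t..σ, (∫ u in r..σ, q u) • c r := by
        rw [← intervalIntegral.integral_add hA1 hA2]
        apply intervalIntegral.integral_congr
        intro r hr
        rw [uIcc_of_le hts] at hr
        simp only
        rw [hFTC r σ hr.1 hr.2, sub_smul]
        abel
      have ha3 : (∫ r in t..σ, (∫ u in r..σ, q u) • c r)
          = ∫ u in t..σ, q u • ∫ r in t..u, c r :=
        tri_swap hts hqcont hcmeas (fun r hr => hcbdd r ⟨hr.1.le, hr.2.trans hσs⟩)
      have ha4 : (∫ r in t..σ, Real.exp (-h r) • c r)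
          = (∫ r in t..σ, b r) + ∫ r in t..σ, H' r • X r := by
        rw [← intervalIntegral.integral_add (hbInt σ hts hσs) (hHX.intervalIntegrable t σ)]
        apply intervalIntegral.integral_congr
        intro r _
        simp only [hcdef]
        rw [smul_smul, ← Real.exp_add, neg_add_cancel, Real.exp_zero, one_smul]
      have ha5 : (∫ u in t..σ, q u • ∫ r in t..u, c r)
          = -(∫ u in t..σ, H' u • X u) - (Real.exp (-h σ) - 1) • x t
            - ∫ u in t..σ, q u • M u := by
        have e1 : EqOn (fun u => q u • ∫ r in t..u, c r)
            (fun u => -(H' u • X u) - q u • x t - q u • M u) (uIcc t σ) := by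
          intro u hu
          rw [uIcc_of_le hts] at hu
          simp only
          have hz : (∫ r in t..u, c r) = Real.exp (h u) • x u - x t - m u := by
            rw [heq' u hu.1]; abel
          rw [hz, smul_sub, smul_sub, smul_smul]
          have e2 : q u * Real.exp (h u) = -H' u := by
            simp only [hqdef]
            rw [mul_assoc, ← Real.exp_add, neg_add_cancel, Real.exp_zero, mul_one]
          rw [e2, ← hXeq u (ht.trans hu.1), ← hMeq u hu.1, neg_smul]
        rw [intervalIntegral.integral_congr e1]
        rw [intervalIntegral.integral_sub (f := fun u => -(H' u • X u) - q u • x t)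
            (g := fun u => q u • M u)
            (((hHX.neg).sub (hqcont.smul continuous_const)).intervalIntegrable t σ)
            (hqM.intervalIntegrable t σ),
          intervalIntegral.integral_sub (f := fun u => -(H' u • X u)) (g := fun u => q u • x t)
            ((hHX.neg).intervalIntegrable t σ)
            ((hqcont.smul continuous_const).intervalIntegrable t σ),
          intervalIntegral.integral_neg]
        congr 2
        rw [intervalIntegral.integral_smul_const, hFTC t σ le_rfl hts, ht0, neg_zero,
          Real.exp_zero]
      have hI1 : Real.exp (-h σ) • (x t + ∫ r in t..σ, c r)
          = x t + ∫ r in t..σ, (b r + (H' r * Real.exp (-h r)) • M r) := by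
        calc Real.exp (-h σ) • (x t + ∫ r in t..σ, c r)
            = Real.exp (-h σ) • x t + ∫ r in t..σ, Real.exp (-h σ) • c r := by
              rw [smul_add, intervalIntegral.integral_smul]
          _ = Real.exp (-h σ) • x t + (((∫ r in t..σ, b r) + ∫ r in t..σ, H' r • X r)
              + (-(∫ u in t..σ, H' u • X u) - (Real.exp (-h σ) - 1) • x t
                - ∫ u in t..σ, q u • M u)) := by
              rw [ha2, ha4, ha3, ha5]
          _ = x t + ((∫ r in t..σ, b r) - ∫ u in t..σ, q u • M u) := by
              rw [sub_smul, one_smul]; abel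
          _ = x t + ∫ r in t..σ, (b r + (H' r * Real.exp (-h r)) • M r) := by
              congr 1
              rw [← intervalIntegral.integral_sub (hbInt σ hts hσs)
                (hqM.intervalIntegrable t σ)]
              apply intervalIntegral.integral_congr
              intro r _
              simp only [hqdef]
              rw [sub_eq_add_neg, ← neg_smul]
              congr 1
              ring
      calc x t + (∫ r in t..σ, c r)
          = Real.exp (h σ) • (Real.exp (-h σ) • (x t + ∫ r in t..σ, c r)) := by
            rw [smul_smul, ← Real.exp_add, add_neg_cancel, Real.exp_zero, one_smul]
        _ = _ := by rw [hI1]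
    -- quantitative estimate
    have hfInt : IntervalIntegrable (fun r => b r + (H' r * Real.exp (-h r)) • M r) volume t σ :=
      (hbInt σ hts hσs).add (((hH'cont.mul hhcont.neg.rexp).smul hMcont).intervalIntegrable t σ)
    have hS1 : (0:ℝ) ≤ 1 + S := by linarith
    set g : ℝ → ℝ := fun r => Ca * (1 + S) * Real.exp ((Ca + δ) * (r - σ))
      + Mm * (Real.exp (h σ) * q r) with hgdef
    have hgcont : Continuous g := by
      apply Continuous.add
      · exact continuous_const.mul ((continuous_const.mul (continuous_id.sub continuous_const)).rexp)
      · exact continuous_const.mul (continuous_const.mul hqcont)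
    have hptw : ∀ r ∈ Icc t σ,
        Real.exp (h σ) * ‖b r + (H' r * Real.exp (-h r)) • M r‖ ≤ g r := by
      intro r hr
      have hr' : r ∈ Icc t s := ⟨hr.1, hr.2.trans hσs⟩
      have hr0 : 0 ≤ r := ht.trans hr.1
      have hH'neg : H' r < 0 := by
        rw [hH'eq r hr.1]; exact lt_of_le_of_lt (hh' r hr.1) (by linarith)
      have hq0 : 0 ≤ q r := by
        simp only [hqdef]
        exact mul_nonneg (by linarith) (Real.exp_nonneg _)
      have hb1 : ‖b r‖ ≤ Ca * (Real.exp (-h r) * (1 + S)) := by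
        refine (hb r hr.1).trans ?_
        apply mul_le_mul_of_nonneg_left _ hCa
        have i1 := hsupr r hr'
        have i2 := honele r hr0
        nlinarith
      have hfb : ‖b r + (H' r * Real.exp (-h r)) • M r‖
          ≤ Ca * (Real.exp (-h r) * (1 + S)) + q r * ‖m r‖ := by
        refine (norm_add_le _ _).trans ?_
        apply add_le_add hb1
        rw [norm_smul, Real.norm_eq_abs]
        have e3 : |H' r * Real.exp (-h r)| = q r := by
          simp only [hqdef]
          rw [abs_of_neg (mul_neg_of_neg_of_pos hH'neg (Real.exp_pos _))]
          ring
        rw [e3, hMeq r hr.1]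
      have hmr : ‖m r‖ ≤ Mm := hMmle r hr'
      calc Real.exp (h σ) * ‖b r + (H' r * Real.exp (-h r)) • M r‖
          ≤ Real.exp (h σ) * (Ca * (Real.exp (-h r) * (1 + S)) + q r * ‖m r‖) :=
            mul_le_mul_of_nonneg_left hfb (Real.exp_nonneg _)
        _ = Ca * (1 + S) * (Real.exp (h σ) * Real.exp (-h r))
            + (Real.exp (h σ) * q r) * ‖m r‖ := by ring
        _ ≤ Ca * (1 + S) * Real.exp ((Ca + δ) * (r - σ)) + (Real.exp (h σ) * q r) * Mm := by
            apply add_le_add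
            · rw [← Real.exp_add]
              apply mul_le_mul_of_nonneg_left _ (mul_nonneg hCa hS1)
              apply Real.exp_le_exp.2
              have := hgap r σ hr.1 hr.2
              nlinarith
            · exact mul_le_mul_of_nonneg_left hmr (mul_nonneg (Real.exp_nonneg _) hq0)
        _ = g r := by simp only [hgdef]; ring
    have hPne : (Ca + δ) ≠ 0 := ne_of_gt hP
    have hexpint : (∫ r in t..σ, Real.exp ((Ca + δ) * (r - σ))) =
        (1 - Real.exp ((Ca + δ) * (t - σ))) / (Ca + δ) := by
      have hd : ∀ r ∈ uIcc t σ,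
          HasDerivAt (fun w => Real.exp ((Ca + δ) * (w - σ)) / (Ca + δ))
            (Real.exp ((Ca + δ) * (r - σ))) r := by
        intro r _
        have h1 : HasDerivAt (fun w => (Ca + δ) * (w - σ)) ((Ca + δ) * 1) r :=
          ((hasDerivAt_id r).sub_const σ).const_mul (Ca + δ)
        have h2 := (h1.exp).div_const (Ca + δ)
        exact h2.congr_deriv (by rw [mul_one, mul_div_assoc, div_self hPne, mul_one])
      rw [intervalIntegral.integral_eq_sub_of_hasDerivAt hd
        (((continuous_const.mul (continuous_id.sub continuous_const)).rexp).intervalIntegrable t σ)]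
      rw [sub_self, mul_zero, Real.exp_zero]
      ring
    have hqint : Real.exp (h σ) * (∫ r in t..σ, q r) = 1 - Real.exp (h σ) := by
      rw [hFTC t σ le_rfl hts, ht0, neg_zero, Real.exp_zero, mul_sub, ← Real.exp_add,
        mul_one, add_neg_cancel, Real.exp_zero]
    have hgint : (∫ r in t..σ, g r) ≤ Ca / (Ca + δ) * (1 + S) + Mm := by
      have e1 : (∫ r in t..σ, g r)
          = Ca * (1 + S) * ((1 - Real.exp ((Ca + δ) * (t - σ))) / (Ca + δ))
            + Mm * (1 - Real.exp (h σ)) := by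
        simp only [hgdef]
        have hg1int : IntervalIntegrable
            (fun r => Ca * (1 + S) * Real.exp ((Ca + δ) * (r - σ))) volume t σ :=
          (continuous_const.mul
            ((continuous_const.mul (continuous_id.sub continuous_const)).rexp)).intervalIntegrable t σ
        have hg2int : IntervalIntegrable
            (fun r => Mm * (Real.exp (h σ) * q r)) volume t σ :=
          (continuous_const.mul (continuous_const.mul hqcont)).intervalIntegrable t σ
        rw [intervalIntegral.integral_add hg1int hg2int,
          intervalIntegral.integral_const_mul, intervalIntegral.integral_const_mul,
          intervalIntegral.integral_const_mul, hexpint, hqint]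
      rw [e1]
      have i1 : (1 - Real.exp ((Ca + δ) * (t - σ))) / (Ca + δ) ≤ 1 / (Ca + δ) := by
        gcongr
        linarith [Real.exp_nonneg ((Ca + δ) * (t - σ))]
      have i2 : Mm * (1 - Real.exp (h σ)) ≤ Mm := by
        nlinarith [Real.exp_nonneg (h σ), hMm0]
      have i3 : Ca * (1 + S) * ((1 - Real.exp ((Ca + δ) * (t - σ))) / (Ca + δ))
          ≤ Ca / (Ca + δ) * (1 + S) := by
        calc Ca * (1 + S) * ((1 - Real.exp ((Ca + δ) * (t - σ))) / (Ca + δ))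
            ≤ Ca * (1 + S) * (1 / (Ca + δ)) :=
              mul_le_mul_of_nonneg_left i1 (mul_nonneg hCa hS1)
          _ = Ca / (Ca + δ) * (1 + S) := by ring
      linarith
    have hnormf : Real.exp (h σ) * ‖∫ r in t..σ, (b r + (H' r * Real.exp (-h r)) • M r)‖
        ≤ Ca / (Ca + δ) * (1 + S) + Mm := by
      calc Real.exp (h σ) * ‖∫ r in t..σ, (b r + (H' r * Real.exp (-h r)) • M r)‖
          ≤ Real.exp (h σ) * ∫ r in t..σ, ‖b r + (H' r * Real.exp (-h r)) • M r‖ :=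
            mul_le_mul_of_nonneg_left (intervalIntegral.norm_integral_le_integral_norm hts)
              (Real.exp_nonneg _)
        _ = ∫ r in t..σ, Real.exp (h σ) * ‖b r + (H' r * Real.exp (-h r)) • M r‖ :=
            (intervalIntegral.integral_const_mul _ _).symm
        _ ≤ ∫ r in t..σ, g r :=
            intervalIntegral.integral_mono_on hts ((hfInt.norm).const_mul _)
              (hgcont.intervalIntegrable t σ) hptw
        _ ≤ Ca / (Ca + δ) * (1 + S) + Mm := hgint
    have hxt : ‖x t‖ ≤ Mt := hMtle t ⟨ht, le_rfl⟩
    have hmσ : ‖m σ‖ ≤ Mm := hMmle σ ⟨hts, hσs⟩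
    calc Real.exp (h σ) * ‖x σ‖ = ‖Real.exp (h σ) • x σ‖ := by
          rw [norm_smul, Real.norm_eq_abs, abs_of_pos (Real.exp_pos _)]
      _ = ‖(x t + ∫ r in t..σ, c r) + m σ‖ := by rw [heq' σ hts]
      _ ≤ ‖x t + ∫ r in t..σ, c r‖ + ‖m σ‖ := norm_add_le _ _
      _ = ‖Real.exp (h σ) • (x t + ∫ r in t..σ, (b r + (H' r * Real.exp (-h r)) • M r))‖
          + ‖m σ‖ := by rw [key]
      _ ≤ Real.exp (h σ) * (‖x t‖ + ‖∫ r in t..σ, (b r + (H' r * Real.exp (-h r)) • M r)‖)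
          + ‖m σ‖ := by
          rw [norm_smul, Real.norm_eq_abs, abs_of_pos (Real.exp_pos _)]
          exact add_le_add_left
            (mul_le_mul_of_nonneg_left (norm_add_le _ _) (Real.exp_nonneg _)) _
      _ = Real.exp (h σ) * ‖x t‖
          + Real.exp (h σ) * ‖∫ r in t..σ, (b r + (H' r * Real.exp (-h r)) • M r)‖
          + ‖m σ‖ := by ring
      _ ≤ Mt + (Ca / (Ca + δ) * (1 + S) + Mm) + Mm := by
          refine add_le_add (add_le_add ?_ hnormf) hmσ
          calc Real.exp (h σ) * ‖x t‖ ≤ 1 * ‖x t‖ :=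
                mul_le_mul_of_nonneg_right (hexple1 σ (ht.trans hts)) (norm_nonneg _)
            _ = ‖x t‖ := one_mul _
            _ ≤ Mt := hxt
      _ = Mt + Ca / (Ca + δ) * (1 + S) + 2 * Mm := by ring
  -- conclude
  have hpos1 : 0 ≤ Ca / (Ca + δ) * (1 + S) := mul_nonneg (div_nonneg hCa hP.le) (by linarith)
  have hfinal2 : S ≤ Mt + Ca / (Ca + δ) * (1 + S) + 2 * Mm := by
    conv_lhs => rw [hSdef]
    apply Real.sSup_le
    · rintro _ ⟨r, hr, rfl⟩
      simp only
      rcases le_total r t with h1 | h1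
      · have e1 : Real.exp (h r) * ‖x r‖ = ‖x r‖ := by
          rw [hh0 r ⟨hr.1, h1⟩, Real.exp_zero, one_mul]
        rw [e1]
        linarith [hMtle r ⟨hr.1, h1⟩, hMm0]
      · exact hmain r ⟨h1, hr.2⟩
    · linarith [hMt0, hMm0]
  rw [div_mul_eq_mul_div, le_div_iff₀ hδ]
  have hexp2 : (Ca + δ) * (Mt + Ca / (Ca + δ) * (1 + S) + 2 * Mm)
      = (Ca + δ) * Mt + Ca * (1 + S) + 2 * (Ca + δ) * Mm := by
    field_simp
  have hmul := mul_le_mul_of_nonneg_left hfinal2 hP.le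
  rw [hexp2] at hmul
  nlinarith [hmul, hMt0, hMm0, hδ.le]
end
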